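/- arXiv:2211.05859 — 2 statements merged into one kernel-verified Lean document; each statement's English description precedes it below -/
import Mathlib

section
/- The four-dimensional system w' = r_w·w·(1−w) − c_w·h_B·w, g' = r_g·g·(1−g−w) − c_g·h_G·g, h_G' = e_g·h_G·(g − h_G), h_B' = e_w·h_B·(w − h_B) with all parameters positive has a unique stationary point with all four coordinates strictly positive, given by w* = r_w/(r_w + c_w), g* = (r_g/(r_g + c_g))·(c_w/(r_w + c_w)), h_G* = g*, h_B* = w*. -/
/-- The four-dimensional savanna model with herbivores has a unique stationary
point with all coordinates strictly positive, given by
`w* = r_w/(r_w+c_w)`, `g* = (r_g/(r_g+c_g))·(c_w/(r_w+c_w))`, `h_G* = g*`, `h_B* = w*`. -/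
theorem stmt_3 (rw rg cw cg ew eg : ℝ)
    (hrw : 0 < rw) (hrg : 0 < rg) (hcw : 0 < cw) (hcg : 0 < cg)
    (hew : 0 < ew) (heg : 0 < eg) :
    ∀ w g hG hB : ℝ, 0 < w → 0 < g → 0 < hG → 0 < hB →
      ((rw * w * (1 - w) - cw * hB * w = 0 ∧
        rg * g * (1 - g - w) - cg * hG * g = 0 ∧
        eg * hG * (g - hG) = 0 ∧
        ew * hB * (w - hB) = 0) ↔
      (w = rw / (rw + cw) ∧
       g = (rg / (rg + cg)) * (cw / (rw + cw)) ∧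
       hG = g ∧ hB = w)) := by
  intro w g hG hB hw hg hhG hhB
  have hrwcw : rw + cw ≠ 0 := by positivity
  have hrgcg : rg + cg ≠ 0 := by positivity
  constructor
  · rintro ⟨h1, h2, h3, h4⟩
    have hGg : hG = g := by
      rcases mul_eq_zero.1 h3 with h | h
      · rcases mul_eq_zero.1 h with h | h
        · exact absurd h (ne_of_gt heg)
        · exact absurd h (ne_of_gt hhG)
      · linarith [sub_eq_zero.1 h]
    have hBw : hB = w := by
      rcases mul_eq_zero.1 h4 with h | h
      · rcases mul_eq_zero.1 h with h | h
        · exact absurd h (ne_of_gt hew)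
        · exact absurd h (ne_of_gt hhB)
      · linarith [sub_eq_zero.1 h]
    rw [hBw] at h1
    rw [hGg] at h2
    have hw' : w = rw / (rw + cw) := by
      have : w * (rw * (1 - w) - cw * w) = 0 := by ring_nf; ring_nf at h1; linarith
      rcases mul_eq_zero.1 this with h | h
      · exact absurd h (ne_of_gt hw)
      · field_simp
        linarith
    have hg' : g = (rg / (rg + cg)) * (cw / (rw + cw)) := by
      have : g * (rg * (1 - g - w) - cg * g) = 0 := by ring_nf; ring_nf at h2; linarith
      rcases mul_eq_zero.1 this with h | h
      · exact absurd h (ne_of_gt hg)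
      · subst hw'
        field_simp at h ⊢
        ring_nf at h ⊢
        nlinarith [h]
    exact ⟨hw', hg', hGg, hBw⟩
  · rintro ⟨hw', hg', hG', hB'⟩
    subst hG' hB' hw' hg'
    refine ⟨?_, ?_, by ring, by ring⟩
    · field_simp
      ring
    · field_simp
      ring
end

section
/- Let α₁, β₁, α₂, β₂ ∈ (0,1). The 2×2 matrix A with entries A₁₁ = α₂α₁(α₂α₁−1)·r_w·w², A₁₂ = α₂(α₂−1)α₁²·r_w·w², A₂₁ = β₂β₁·r_g·g·((α₂α₁−1)w + (β₂β₁−1)g), A₂₂ = β₂β₁·r_g·g·((α₂−1)α₁w + (β₂−1)β₁g), where r_w, r_g, w, g > 0, has determinant zero if and only if (α₁/β₁)·((1−α₂)/(1−β₂)) = (1−α₁α₂)/(1−β₁β₂). -/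
/-- Determinant degeneracy condition for the matrix arising in the T-process
proof for the 2-dimensional savanna model. -/
theorem stmt_7 (a1 b1 a2 b2 rw rg w g : ℝ)
    (ha1 : a1 ∈ Set.Ioo (0:ℝ) 1) (hb1 : b1 ∈ Set.Ioo (0:ℝ) 1)
    (ha2 : a2 ∈ Set.Ioo (0:ℝ) 1) (hb2 : b2 ∈ Set.Ioo (0:ℝ) 1)
    (hrw : 0 < rw) (hrg : 0 < rg) (hw : 0 < w) (hg : 0 < g) :
    (Matrix.det !![a2 * a1 * (a2 * a1 - 1) * rw * w ^ 2,
                   a2 * (a2 - 1) * a1 ^ 2 * rw * w ^ 2;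
                   b2 * b1 * rg * g * ((a2 * a1 - 1) * w + (b2 * b1 - 1) * g),
                   b2 * b1 * rg * g * ((a2 - 1) * a1 * w + (b2 - 1) * b1 * g)] = 0)
    ↔ (a1 / b1) * ((1 - a2) / (1 - b2)) = (1 - a1 * a2) / (1 - b1 * b2) := by
  obtain ⟨ha1p, ha1l⟩ := ha1
  obtain ⟨hb1p, hb1l⟩ := hb1
  obtain ⟨ha2p, ha2l⟩ := ha2
  obtain ⟨hb2p, hb2l⟩ := hb2
  have hC : a2 * a1 * rw * w ^ 2 * (b2 * b1 * rg * g * g) ≠ 0 := by positivity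
  have key : Matrix.det !![a2 * a1 * (a2 * a1 - 1) * rw * w ^ 2,
                   a2 * (a2 - 1) * a1 ^ 2 * rw * w ^ 2;
                   b2 * b1 * rg * g * ((a2 * a1 - 1) * w + (b2 * b1 - 1) * g),
                   b2 * b1 * rg * g * ((a2 - 1) * a1 * w + (b2 - 1) * b1 * g)]
      = a2 * a1 * rw * w ^ 2 * (b2 * b1 * rg * g * g) *
        ((a2 * a1 - 1) * ((b2 - 1) * b1) - (a2 - 1) * a1 * (b2 * b1 - 1)) := by
    rw [Matrix.det_fin_two_of]; ring
  rw [key, mul_eq_zero, or_iff_right hC]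
  have hb1' : b1 ≠ 0 := ne_of_gt hb1p
  have hb2' : (1 : ℝ) - b2 ≠ 0 := by linarith
  have hbb : (1 : ℝ) - b1 * b2 ≠ 0 := by nlinarith
  rw [div_mul_div_comm, div_eq_div_iff (by positivity) (by nlinarith)]
  constructor <;> intro h <;> nlinarith [h]
end
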